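/- Let U, V ⊆ ℂ be open sets, let p, q : ℂ → ℂ with p differentiable on U, and let Ψ : ℂ → ℂ be twice differentiable on U and satisfy Ψ''(x) + p(x)·Ψ'(x) + q(x)·Ψ(x) = 0 for all x ∈ U. Let z : ℂ → ℂ be three times differentiable on U with z'(x) ≠ 0 for all x ∈ U and z(U) ⊆ V; let h : ℂ → ℂ be differentiable on U with h'(x) = p(x)/2 on U; let g : ℂ → ℂ be differentiable on U with g(x)² = z'(x) on U; and let ψ : ℂ → ℂ be twice differentiable on V with ψ(z(x)) = g(x)·exp(h(x))·Ψ(x) for all x ∈ U. Then for every x ∈ U, ψ''(z(x)) = (1/2)·[ z'''(x)/z'(x)³ − (3/2)·z''(x)²/z'(x)⁴ + (p'(x) + p(x)²/2 − 2·q(x))/z'(x)² ]·ψ(z(x)). -/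

import Mathlib

/-! With the gauge factor `A = g e^h`, put `F = ψ ∘ z = A Ψ`. The chain rule gives `F' = ψ'(z) z'`
and `F'' = ψ''(z) z'² + ψ'(z) z''`, while Leibniz's rule and the ODE give
`F'' = (A'' - qA) Ψ + (2A' - pA) Ψ'`. Because `z' = g²` and `h' = p/2`, `2A' - pA = A z''/z'`, so
the `Ψ'` terms cancel on eliminating `ψ'(z) z''`, leaving `ψ''(z) z'² = (A'' - qA - A' z''/z') Ψ`;
expanding `A''` and `z'''` through `g` gives the stated coefficient. -/

open Complex Filter Topology

section SecondDerivative

variable {𝕜 : Type*} [NontriviallyNormedField 𝕜] {x : 𝕜}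

theorem deriv_deriv_comp {ψ z : 𝕜 → 𝕜} (hψ : ∀ᶠ y in 𝓝 x, DifferentiableAt 𝕜 ψ (z y))
    (hz : ∀ᶠ y in 𝓝 x, DifferentiableAt 𝕜 z y) (hψ' : DifferentiableAt 𝕜 (deriv ψ) (z x))
    (hz' : DifferentiableAt 𝕜 (deriv z) x) :
    deriv (deriv (ψ ∘ z)) x =
      deriv (deriv ψ) (z x) * deriv z x ^ 2 + deriv ψ (z x) * deriv (deriv z) x := by
  have hchain : deriv (ψ ∘ z) =ᶠ[𝓝 x] fun y => deriv ψ (z y) * deriv z y := by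
    filter_upwards [hψ, hz] with y hψy hzy using deriv_comp y hψy hzy
  have hψz : DifferentiableAt 𝕜 (fun y => deriv ψ (z y)) x := hψ'.comp x hz.self_of_nhds
  have hψz' : deriv (fun y => deriv ψ (z y)) x = deriv (deriv ψ) (z x) * deriv z x :=
    deriv_comp x hψ' hz.self_of_nhds
  rw [hchain.deriv_eq, deriv_fun_mul hψz hz', hψz']
  ring

variable {𝔸 : Type*} [NormedCommRing 𝔸] [NormedAlgebra 𝕜 𝔸] {f g : 𝕜 → 𝔸}

theorem deriv_mul_eventuallyEq (hf : ∀ᶠ y in 𝓝 x, DifferentiableAt 𝕜 f y)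
    (hg : ∀ᶠ y in 𝓝 x, DifferentiableAt 𝕜 g y) :
    deriv (fun y => f y * g y) =ᶠ[𝓝 x] fun y => deriv f y * g y + f y * deriv g y := by
  filter_upwards [hf, hg] with y hfy hgy using deriv_fun_mul hfy hgy

theorem differentiableAt_deriv_mul (hf : ∀ᶠ y in 𝓝 x, DifferentiableAt 𝕜 f y)
    (hg : ∀ᶠ y in 𝓝 x, DifferentiableAt 𝕜 g y) (hf' : DifferentiableAt 𝕜 (deriv f) x)
    (hg' : DifferentiableAt 𝕜 (deriv g) x) :
    DifferentiableAt 𝕜 (deriv (fun y => f y * g y)) x :=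
  ((hf'.mul hg.self_of_nhds).add (hf.self_of_nhds.mul hg')).congr_of_eventuallyEq
    (deriv_mul_eventuallyEq hf hg)

theorem deriv_deriv_mul (hf : ∀ᶠ y in 𝓝 x, DifferentiableAt 𝕜 f y)
    (hg : ∀ᶠ y in 𝓝 x, DifferentiableAt 𝕜 g y) (hf' : DifferentiableAt 𝕜 (deriv f) x)
    (hg' : DifferentiableAt 𝕜 (deriv g) x) :
    deriv (deriv (fun y => f y * g y)) x =
      deriv (deriv f) x * g x + 2 * (deriv f x * deriv g x) + f x * deriv (deriv g) x := by
  rw [(deriv_mul_eventuallyEq hf hg).deriv_eq,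
    deriv_fun_add (hf'.fun_mul hg.self_of_nhds) (hf.self_of_nhds.fun_mul hg'),
    deriv_fun_mul hf' hg.self_of_nhds, deriv_fun_mul hf.self_of_nhds hg']
  ring

end SecondDerivative

section SquareRoot

variable {𝕜 : Type*} [NontriviallyNormedField 𝕜] {f g : 𝕜 → 𝕜} {x : 𝕜}

theorem deriv_eq_of_sq_eventuallyEq (hgf : (fun y => g y ^ 2) =ᶠ[𝓝 x] f)
    (hg : DifferentiableAt 𝕜 g x) : deriv f x = 2 * g x * deriv g x := by
  rw [← hgf.deriv_eq, deriv_fun_pow hg]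
  ring

theorem differentiableAt_deriv_of_sq_eventuallyEq [CharZero 𝕜]
    (hgf : (fun y => g y ^ 2) =ᶠ[𝓝 x] f) (hg : ∀ᶠ y in 𝓝 x, DifferentiableAt 𝕜 g y) (hgx : g x ≠ 0)
    (hf' : DifferentiableAt 𝕜 (deriv f) x) : DifferentiableAt 𝕜 (deriv g) x := by
  have hquot : deriv g =ᶠ[𝓝 x] fun y => deriv f y / (2 * g y) := by
    filter_upwards [hgf.eventuallyEq_nhds, hg, hg.self_of_nhds.continuousAt.eventually_ne hgx]
      with y hgfy hgy hgy0
    rw [deriv_eq_of_sq_eventuallyEq hgfy hgy]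
    field_simp
  exact (hf'.div ((differentiableAt_const 2).mul hg.self_of_nhds)
    (mul_ne_zero two_ne_zero hgx)).congr_of_eventuallyEq hquot

theorem deriv_deriv_eq_of_sq_eventuallyEq (hgf : (fun y => g y ^ 2) =ᶠ[𝓝 x] f)
    (hg : ∀ᶠ y in 𝓝 x, DifferentiableAt 𝕜 g y) (hg' : DifferentiableAt 𝕜 (deriv g) x) :
    deriv (deriv f) x = 2 * (deriv g x ^ 2 + g x * deriv (deriv g) x) := by
  have hgf' : (fun y => g y * g y) =ᶠ[𝓝 x] f := by
    simpa only [sq] using hgf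
  rw [← hgf'.deriv.deriv_eq, deriv_deriv_mul hg hg hg' hg']
  ring

end SquareRoot

section ComplexExp

variable {h : ℂ → ℂ} {x : ℂ}

theorem deriv_cexp_eventuallyEq (hh : ∀ᶠ y in 𝓝 x, DifferentiableAt ℂ h y) :
    deriv (fun y => exp (h y)) =ᶠ[𝓝 x] fun y => exp (h y) * deriv h y := by
  filter_upwards [hh] with y hy using deriv_cexp hy

theorem differentiableAt_deriv_cexp (hh : ∀ᶠ y in 𝓝 x, DifferentiableAt ℂ h y)
    (hh' : DifferentiableAt ℂ (deriv h) x) :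
    DifferentiableAt ℂ (deriv fun y => exp (h y)) x :=
  (hh.self_of_nhds.cexp.mul hh').congr_of_eventuallyEq (deriv_cexp_eventuallyEq hh)

theorem deriv_deriv_cexp (hh : ∀ᶠ y in 𝓝 x, DifferentiableAt ℂ h y)
    (hh' : DifferentiableAt ℂ (deriv h) x) :
    deriv (deriv fun y => exp (h y)) x = exp (h x) * (deriv h x ^ 2 + deriv (deriv h) x) := by
  rw [(deriv_cexp_eventuallyEq hh).deriv_eq, deriv_fun_mul hh.self_of_nhds.cexp hh',
    deriv_cexp hh.self_of_nhds]
  ring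

end ComplexExp

theorem canonical_normal_form_change_of_variables
    (U V : Set ℂ) (hU : IsOpen U)
    (p q Ψ z h g ψ : ℂ → ℂ)
    (hp : ∀ x ∈ U, DifferentiableAt ℂ p x)
    (hΨ1 : ∀ x ∈ U, DifferentiableAt ℂ Ψ x)
    (hΨ2 : ∀ x ∈ U, DifferentiableAt ℂ (deriv Ψ) x)
    (hode : ∀ x ∈ U, deriv (deriv Ψ) x + p x * deriv Ψ x + q x * Ψ x = 0)
    (hz1 : ∀ x ∈ U, DifferentiableAt ℂ z x)
    (hz2 : ∀ x ∈ U, DifferentiableAt ℂ (deriv z) x)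
    (hz3 : ∀ x ∈ U, DifferentiableAt ℂ (deriv (deriv z)) x)
    (hz0 : ∀ x ∈ U, deriv z x ≠ 0)
    (hzV : Set.MapsTo z U V)
    (hh : ∀ x ∈ U, DifferentiableAt ℂ h x)
    (hh' : ∀ x ∈ U, deriv h x = p x / 2)
    (hg : ∀ x ∈ U, DifferentiableAt ℂ g x)
    (hg2 : ∀ x ∈ U, g x ^ 2 = deriv z x)
    (hψ1 : ∀ w ∈ V, DifferentiableAt ℂ ψ w)
    (hψ2 : ∀ w ∈ V, DifferentiableAt ℂ (deriv ψ) w)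
    (hrel : ∀ x ∈ U, ψ (z x) = g x * Complex.exp (h x) * Ψ x) :
    ∀ x ∈ U,
      deriv (deriv ψ) (z x) =
        (1 / 2) * (deriv (deriv (deriv z)) x / (deriv z x) ^ 3
          - (3 / 2) * (deriv (deriv z) x) ^ 2 / (deriv z x) ^ 4
          + (deriv p x + (p x) ^ 2 / 2 - 2 * q x) / (deriv z x) ^ 2) * ψ (z x) := by
  intro x hx
  have near {P : ℂ → Prop} (hP : ∀ y ∈ U, P y) : ∀ᶠ y in 𝓝 x, P y :=
    eventually_of_mem (hU.mem_nhds hx) hP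
  have hgx : g x ≠ 0 := fun h0 => hz0 x hx (by rw [← hg2 x hx, h0, zero_pow two_ne_zero])
  have hgz : (fun y => g y ^ 2) =ᶠ[𝓝 x] deriv z := near hg2
  have hg' := differentiableAt_deriv_of_sq_eventuallyEq hgz (near hg) hgx (hz3 x hx)
  have hhp : deriv h =ᶠ[𝓝 x] fun y => p y / 2 := near hh'
  have hh'' : DifferentiableAt ℂ (deriv h) x :=
    ((hp x hx).div_const 2).congr_of_eventuallyEq hhp
  have hE : ∀ᶠ y in 𝓝 x, DifferentiableAt ℂ (fun y => exp (h y)) y :=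
    (near hh).mono fun y hy => hy.cexp
  have hE' := differentiableAt_deriv_cexp (near hh) hh''
  have hA : ∀ᶠ y in 𝓝 x, DifferentiableAt ℂ (fun y => g y * exp (h y)) y :=
    (near hg).and hE |>.mono fun y hy => hy.1.mul hy.2
  have hF : ψ ∘ z =ᶠ[𝓝 x] fun y => g y * exp (h y) * Ψ y := near hrel
  have hfirst : deriv ψ (z x) * deriv z x = deriv (fun y => g y * exp (h y) * Ψ y) x := by
    rw [← hF.deriv_eq, deriv_comp x (hψ1 _ (hzV hx)) (hz1 x hx)]
  have hsecond := deriv_deriv_comp (near fun y hy => hψ1 _ (hzV hy)) (near hz1)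
    (hψ2 _ (hzV hx)) (hz2 x hx)
  rw [hF.deriv.deriv_eq] at hsecond
  simp only [deriv_deriv_mul hA (near hΨ1) (differentiableAt_deriv_mul (near hg) hE hg' hE')
      (hΨ2 x hx), deriv_deriv_mul (near hg) hE hg' hE', deriv_deriv_cexp (near hh) hh'',
    deriv_fun_mul hA.self_of_nhds (hΨ1 x hx), deriv_fun_mul (hg x hx) hE.self_of_nhds,
    deriv_cexp (hh x hx), hhp.deriv_eq, deriv_div_const, hh' x hx, hrel x hx,
    deriv_eq_of_sq_eventuallyEq hgz (hg x hx), deriv_deriv_eq_of_sq_eventuallyEq hgz (near hg) hg',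
    ← hg2 x hx] at hfirst hsecond ⊢
  field_simp
  -- the goal is `4 g⁵ ψ''(z) = …`, and `4 g⁵ ψ''(z) = 4 g F'' - 8 g' F'` by the chain rule
  linear_combination (-4 * g x) * hsecond - 8 * deriv g x * hfirst
    + 4 * g x ^ 2 * exp (h x) * hode x hx
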